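/- arXiv:1610.05056 — 7 statements merged into one kernel-verified Lean document; each statement's English description precedes it below -/
import Mathlib

section
/- Let ρ > 0 and α ∈ I. The Dirac measure ρδ_α is a stationary solution of the spatially homogeneous Boltzmann-type model, i.e. ∫_I ∫_I (ψ(𝒞(θ⁎, φ⁎)) − ψ(θ⁎)) d(ρδ_α)(θ⁎) d(ρδ_α)(φ⁎) = 0 for every continuous 2π-periodic function ψ : ℝ → ℝ, if and only if α = α_d. -/
open MeasureTheory Real
open scoped Real

/-- The angular collision-probability profile `𝒢(s) = (1/π)·min{s, 2π−s}`. -/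
noncomputable def Gfun (s : ℝ) : ℝ := (1 / π) * min s (2 * π - s)

/-- The collision probability `P(θ⁎, φ⁎) = a·𝒢(|θ⁎ − φ⁎|)`. -/
noncomputable def Pcoll (a θ φ : ℝ) : ℝ := a * Gfun |θ - φ|

/-- The post-interaction angle
`𝒞(θ⁎, φ⁎) = θ⁎ + (1 − P(θ⁎, φ⁎))(α_d − θ⁎) + P(θ⁎, φ⁎)·α_c`. -/
noncomputable def Cpost (a αd αc θ φ : ℝ) : ℝ :=
  θ + (1 - Pcoll a θ φ) * (αd - θ) + Pcoll a θ φ * αc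

/-!
Integrating against `ρδ_α ⊗ ρδ_α` evaluates the integrand on the diagonal, where the collision
probability vanishes and the post-interaction angle is `α_d`; the integral is therefore
`ρ²(ψ(α_d) − ψ(α))`. It vanishes for every `ψ` when `α = α_d`, and the test function
`ψ = cos(· − α_d)` forces `cos(α − α_d) = 1`, hence `α = α_d` since `|α − α_d| ≤ π`.
-/

lemma Gfun_zero : Gfun 0 = 0 := by
  simp [Gfun, pi_pos.le]

lemma Pcoll_self (a θ : ℝ) : Pcoll a θ θ = 0 := by
  simp [Pcoll, Gfun_zero]

lemma Cpost_self (a αd αc θ : ℝ) : Cpost a αd αc θ θ = αd := by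
  simp [Cpost, Pcoll_self]

lemma integral_integral_smul_dirac {X E : Type*} [MeasurableSpace X] [MeasurableSingletonClass X]
    [NormedAddCommGroup E] [NormedSpace ℝ E] [CompleteSpace E]
    {c : ℝ} (hc : 0 ≤ c) (x : X) (f : X → X → E) :
    ∫ θ, (∫ φ, f θ φ ∂(ENNReal.ofReal c • Measure.dirac x)) ∂(ENNReal.ofReal c • Measure.dirac x)
      = c • c • f x x := by
  simp only [integral_smul_measure, integral_dirac, ENNReal.toReal_ofReal hc]

lemma cos_sub_periodic (αd : ℝ) : Function.Periodic (fun x => cos (x - αd)) (2 * π) := by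
  intro x
  simp only [add_sub_right_comm, cos_add_two_pi]

theorem stmt_0_general (αd αc : ℝ)
    (ρ a : ℝ) (hρ : 0 < ρ)
    (α : ℝ) (hα : α ∈ Set.Ico (-π + αd) (π + αd)) :
    (∀ ψ : ℝ → ℝ, Continuous ψ → (∀ x, ψ (x + 2 * π) = ψ x) →
      ∫ θ, (∫ φ, (ψ (Cpost a αd αc θ φ) - ψ θ)
          ∂((ENNReal.ofReal ρ) • Measure.dirac α))
        ∂((ENNReal.ofReal ρ) • Measure.dirac α) = 0) ↔ α = αd := by
  simp only [integral_integral_smul_dirac hρ.le, Cpost_self, smul_eq_mul, mul_eq_zero,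
    hρ.ne', false_or, sub_eq_zero]
  constructor
  · intro h
    have hcos : cos (α - αd) = 1 := by
      simpa using (h (fun x => cos (x - αd)) (by fun_prop) (cos_sub_periodic αd)).symm
    have hα' := (cos_eq_one_iff_of_lt_of_lt (by linarith [hα.1, pi_pos])
      (by linarith [hα.2, pi_pos])).mp hcos
    linarith
  · rintro rfl ψ - -
    rfl

/-- The Dirac measure `ρδ_α` is a stationary solution of the spatially homogeneous
Boltzmann-type model if and only if `α = α_d`. -/
theorem stmt_0 (αd αc : ℝ) (hαd : αd ∈ Set.Ico (-π) π) (hαc : αc ∈ Set.Ico (-π) π)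
    (ρ a : ℝ) (hρ : 0 < ρ) (hρ1 : ρ ≤ 1) (ha : a ∈ Set.Icc (0 : ℝ) 1)
    (α : ℝ) (hα : α ∈ Set.Ico (-π + αd) (π + αd)) :
    (∀ ψ : ℝ → ℝ, Continuous ψ → (∀ x, ψ (x + 2 * π) = ψ x) →
      ∫ θ, (∫ φ, (ψ (Cpost a αd αc θ φ) - ψ θ)
          ∂((ENNReal.ofReal ρ) • Measure.dirac α))
        ∂((ENNReal.ofReal ρ) • Measure.dirac α) = 0) ↔ α = αd :=
  stmt_0_general αd αc ρ a hρ α hα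
end

section
/- Assume a = a(ρ) ∈ (0, 1] and ρ > 0. Let (f(t))_{t≥0} be a weak solution of the spatially homogeneous Boltzmann-type model with initial datum f₀ of total mass ρ, and set θ̄₀ := (1/ρ)∫_I |θ − α_d| f₀(dθ). If θ̄₀ < π(1/a − 1) and |α_c| ≤ (π/2)(1/a − 1) − θ̄₀/2, then θ̄(t) := (1/ρ)∫_I |θ − α_d| f(t)(dθ) tends to 0 as t → +∞ (i.e. f(t) converges to the aligned state ρδ_{α_d} in first moment, hence in 1-Wasserstein distance). -/
/-!
Test the weak formulation against `ψ(θ) = dist(θ, α_d)` on the circle `ℝ ⧸ 2πℤ`, an admissible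
(bounded, continuous, `2π`-periodic) observable that agrees with `|θ − α_d|` on `I`. Since
`𝒞 − α_d = P·(θ − α_d + α_c)` with `P ≤ a` and `P ≤ (a/π)|θ − φ|`, each collision contracts `ψ`
up to a drift term controlled by `|α_c|`, so that `g(t) = ∫ ψ f(t)` satisfies `g' ≤ −L g` with
`L = ρ(1 − a − 2a|α_c|/π)`. Grönwall gives `g(t) ≤ g(0) e^{−Lt}`, and the hypothesis on `|α_c|`
makes `L ≥ (ρa/π) θ̄₀`, which is positive unless `θ̄₀ = 0`, where there is nothing to prove.
-/

open MeasureTheory Real Filter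
open scoped Real

open Set

noncomputable def angleDist (αd θ : ℝ) : ℝ := ‖((θ - αd : ℝ) : AddCircle (2 * π))‖

section AngleDist

variable (αd : ℝ)

lemma angleDist_nonneg (θ : ℝ) : 0 ≤ angleDist αd θ := norm_nonneg _

lemma angleDist_le_pi (θ : ℝ) : angleDist αd θ ≤ π := by
  have h := AddCircle.norm_le_half_period (2 * π) (x := ((θ - αd : ℝ) : AddCircle (2 * π)))
    two_pi_pos.ne'
  rwa [abs_of_pos two_pi_pos, mul_div_cancel_left₀ π two_ne_zero] at h

lemma abs_angleDist_le_pi (θ : ℝ) : |angleDist αd θ| ≤ π := by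
  rw [abs_of_nonneg (angleDist_nonneg αd θ)]
  exact angleDist_le_pi αd θ

lemma continuous_angleDist : Continuous (angleDist αd) :=
  continuous_norm.comp ((AddCircle.continuous_mk' _).comp (continuous_sub_right αd))

lemma angleDist_add_two_pi (θ : ℝ) : angleDist αd (θ + 2 * π) = angleDist αd θ := by
  rw [angleDist, add_sub_right_comm, AddCircle.coe_add_period]
  rfl

lemma angleDist_le_abs (θ : ℝ) : angleDist αd θ ≤ |θ - αd| :=
  QuotientAddGroup.norm_mk_le_norm

variable {αd}

lemma angleDist_eq_abs {θ : ℝ} (hθ : |θ - αd| ≤ π) : angleDist αd θ = |θ - αd| := by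
  refine (AddCircle.norm_coe_eq_abs_iff _ two_pi_pos.ne').2 ?_
  rwa [abs_of_pos two_pi_pos, mul_div_cancel_left₀ π two_ne_zero]

lemma abs_sub_le_pi_of_mem_Ico {θ : ℝ} (hθ : θ ∈ Ico (-π + αd) (π + αd)) : |θ - αd| ≤ π :=
  abs_le.2 ⟨by linarith [hθ.1], by linarith [hθ.2]⟩

end AngleDist

section Collision

variable {a αd αc θ φ : ℝ}

lemma Gfun_nonneg {s : ℝ} (hs₀ : 0 ≤ s) (hs : s ≤ 2 * π) : 0 ≤ Gfun s :=
  mul_nonneg (by positivity) (le_min hs₀ (by linarith))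

lemma Gfun_le_one (s : ℝ) : Gfun s ≤ 1 := by
  have hmin : min s (2 * π - s) ≤ π := by
    rcases le_total s π with h | h
    · exact (min_le_left _ _).trans h
    · exact (min_le_right _ _).trans (by linarith)
  rw [Gfun, one_div_mul_eq_div, div_le_one pi_pos]
  exact hmin

lemma Gfun_le_div_pi (s : ℝ) : Gfun s ≤ s / π := by
  rw [Gfun, one_div_mul_eq_div]
  exact div_le_div_of_nonneg_right (min_le_left _ _) pi_pos.le

lemma Pcoll_nonneg (ha : 0 ≤ a) (hθφ : |θ - φ| ≤ 2 * π) : 0 ≤ Pcoll a θ φ :=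
  mul_nonneg ha (Gfun_nonneg (abs_nonneg _) hθφ)

lemma Pcoll_le (ha : 0 ≤ a) : Pcoll a θ φ ≤ a :=
  mul_le_of_le_one_right ha (Gfun_le_one _)

lemma Pcoll_le_mul_abs_sub (ha : 0 ≤ a) : Pcoll a θ φ ≤ a / π * |θ - φ| := by
  rw [Pcoll, div_mul_eq_mul_div, mul_div_assoc]
  exact mul_le_mul_of_nonneg_left (Gfun_le_div_pi _) ha

lemma Cpost_sub (a αd αc θ φ : ℝ) :
    Cpost a αd αc θ φ - αd = Pcoll a θ φ * (θ - αd + αc) := by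
  rw [Cpost]; ring

lemma continuous_Cpost (a αd αc : ℝ) :
    Continuous fun q : ℝ × ℝ => Cpost a αd αc q.1 q.2 := by
  unfold Cpost Pcoll Gfun
  fun_prop

lemma angleDist_Cpost_le (ha : 0 ≤ a) (hθ : |θ - αd| ≤ π) (hφ : |φ - αd| ≤ π) :
    angleDist αd (Cpost a αd αc θ φ) ≤
      a * angleDist αd θ + a * |αc| / π * (angleDist αd θ + angleDist αd φ) := by
  rw [angleDist_eq_abs hθ, angleDist_eq_abs hφ]
  have hθφ : |θ - φ| ≤ |θ - αd| + |φ - αd| := abs_sub_comm αd φ ▸ abs_sub_le θ αd φ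
  have hP₀ : 0 ≤ Pcoll a θ φ := Pcoll_nonneg ha (by linarith)
  calc angleDist αd (Cpost a αd αc θ φ)
      ≤ |Pcoll a θ φ * (θ - αd + αc)| := by
        rw [← Cpost_sub]; exact angleDist_le_abs αd _
    _ ≤ Pcoll a θ φ * |θ - αd| + Pcoll a θ φ * |αc| := by
        rw [abs_mul, abs_of_nonneg hP₀, ← mul_add]
        exact mul_le_mul_of_nonneg_left (abs_add_le _ _) hP₀
    _ ≤ a * |θ - αd| + a / π * (|θ - αd| + |φ - αd|) * |αc| := by
        gcongr
        · exact Pcoll_le ha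
        · exact (Pcoll_le_mul_abs_sub ha).trans (by gcongr)
    _ = a * |θ - αd| + a * |αc| / π * (|θ - αd| + |φ - αd|) := by ring

end Collision

theorem integral_integral_le_of_le_add {α : Type*} [MeasurableSpace α] {μ : Measure α}
    [IsFiniteMeasure μ] {F : α → α → ℝ} {u : α → ℝ} {A B : ℝ}
    (hF : Integrable (Function.uncurry F) (μ.prod μ)) (hu : Integrable u μ)
    (hle : ∀ᵐ θ ∂μ, ∀ᵐ φ ∂μ, F θ φ ≤ A * u θ + B * u φ) :
    ∫ θ, ∫ φ, F θ φ ∂μ ∂μ ≤ (A + B) * μ.real univ * ∫ θ, u θ ∂μ := by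
  have hinner : ∀ θ, ∫ φ, (A * u θ + B * u φ) ∂μ = A * u θ * μ.real univ + B * ∫ φ, u φ ∂μ :=
    fun θ => by
      rw [integral_add (integrable_const _) (hu.const_mul B), integral_const, integral_const_mul,
        smul_eq_mul, mul_comm (μ.real univ)]
  calc ∫ θ, ∫ φ, F θ φ ∂μ ∂μ
      ≤ ∫ θ, (A * u θ * μ.real univ + B * ∫ φ, u φ ∂μ) ∂μ := by
        refine integral_mono_ae hF.integral_prod_left
          (((hu.const_mul A).mul_const _).add (integrable_const _)) ?_
        filter_upwards [hle, hF.prod_right_ae] with θ hθ hFθ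
        rw [← hinner]
        exact integral_mono_ae hFθ ((integrable_const _).add (hu.const_mul B)) hθ
    _ = (A + B) * μ.real univ * ∫ θ, u θ ∂μ := by
        rw [integral_add ((hu.const_mul A).mul_const _) (integrable_const _), integral_mul_const,
          integral_const_mul, integral_const, smul_eq_mul]
        ring

theorem integral_collision_angleDist_le {μ : Measure ℝ} [IsFiniteMeasure μ] {a αd αc : ℝ}
    (ha : 0 ≤ a) (hμ : ∀ᵐ θ ∂μ, |θ - αd| ≤ π) :
    ∫ θ, ∫ φ, (angleDist αd (Cpost a αd αc θ φ) - angleDist αd θ) ∂μ ∂μ ≤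
      -(μ.real univ * (1 - a - 2 * (a * |αc| / π))) * ∫ θ, angleDist αd θ ∂μ := by
  set c := a * |αc| / π
  have hcont : Continuous fun q : ℝ × ℝ =>
      angleDist αd (Cpost a αd αc q.1 q.2) - angleDist αd q.1 :=
    ((continuous_angleDist αd).comp (continuous_Cpost a αd αc)).sub
      ((continuous_angleDist αd).comp continuous_fst)
  have hF : Integrable (Function.uncurry fun θ φ =>
      angleDist αd (Cpost a αd αc θ φ) - angleDist αd θ) (μ.prod μ) :=
    .of_bound hcont.aestronglyMeasurable π <| .of_forall fun q =>
      abs_sub_le_of_nonneg_of_le (angleDist_nonneg _ _) (angleDist_le_pi _ _)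
        (angleDist_nonneg _ _) (angleDist_le_pi _ _)
  have hu : Integrable (angleDist αd) μ :=
    .of_bound (continuous_angleDist αd).aestronglyMeasurable π
      (.of_forall (abs_angleDist_le_pi αd))
  refine (integral_integral_le_of_le_add (A := a - 1 + c) (B := c) hF hu ?_).trans_eq (by ring)
  filter_upwards [hμ] with θ hθ
  filter_upwards [hμ] with φ hφ
  linarith [angleDist_Cpost_le (αc := αc) ha hθ hφ]

theorem le_mul_exp_of_hasDerivAt_le {g g' : ℝ → ℝ} {L : ℝ}
    (hg : ∀ t, 0 ≤ t → HasDerivAt g (g' t) t) (hle : ∀ t, 0 ≤ t → g' t ≤ -L * g t)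
    {t : ℝ} (ht : 0 ≤ t) : g t ≤ g 0 * exp (-L * t) := by
  have h := le_gronwallBound_of_liminf_deriv_right_le (f' := g') (δ := g 0) (K := -L) (ε := 0)
    (fun s hs => (hg s hs.1).continuousAt.continuousWithinAt)
    (fun s hs _ hr => (hg s hs.1).hasDerivWithinAt.liminf_right_slope_le hr) le_rfl
    (fun s hs => by rw [add_zero]; exact hle s hs.1) t ⟨ht, le_rfl⟩
  rwa [sub_zero, gronwallBound_ε0] at h

theorem tendsto_zero_of_le_mul_exp {g : ℝ → ℝ} {C L k : ℝ} (hk : 0 < k) (hC : 0 ≤ C)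
    (hL : k * C ≤ L) (hg₀ : ∀ᶠ t in atTop, 0 ≤ g t)
    (hg : ∀ᶠ t in atTop, g t ≤ C * exp (-L * t)) : Tendsto g atTop (nhds 0) := by
  have hbound : Tendsto (fun t => C * exp (-L * t)) atTop (nhds 0) := by
    rcases hC.eq_or_lt with rfl | hC
    · simp
    have hL : 0 < L := (mul_pos hk hC).trans_le hL
    simpa using (tendsto_exp_atBot.comp
      (tendsto_id.const_mul_atTop_of_neg (neg_lt_zero.2 hL))).const_mul C
  exact tendsto_of_tendsto_of_tendsto_of_le_of_le' tendsto_const_nhds hbound hg₀ hg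

theorem stmt_1_general (αd αc : ℝ)
    (ρ a : ℝ) (hρ : 0 < ρ) (ha : 0 < a)
    (f : ℝ → Measure ℝ)
    (hsupp : ∀ t, 0 ≤ t → f t (Set.Ico (-π + αd) (π + αd))ᶜ = 0)
    (hmass : ∀ t, 0 ≤ t → f t Set.univ = ENNReal.ofReal ρ)
    -- weak formulation of the spatially homogeneous Boltzmann-type model:
    (hweak : ∀ ψ : ℝ → ℝ, Measurable ψ → (∃ M, ∀ x, |ψ x| ≤ M) →
      (∀ x, ψ (x + 2 * π) = ψ x) → ∀ t, 0 ≤ t →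
      HasDerivAt (fun s => ∫ θ, ψ θ ∂(f s))
        (∫ θ, ∫ φ, (ψ (Cpost a αd αc θ φ) - ψ θ) ∂(f t) ∂(f t)) t)
    (θbar0 : ℝ) (hθbar0 : θbar0 = (1 / ρ) * ∫ θ, |θ - αd| ∂(f 0))
    (h2 : |αc| ≤ (π / 2) * (1 / a - 1) - θbar0 / 2) :
    Tendsto (fun t => (1 / ρ) * ∫ θ, |θ - αd| ∂(f t)) atTop (nhds 0) := by
  set L := ρ * (1 - a - 2 * (a * |αc| / π))
  have hfin (t : ℝ) (ht : 0 ≤ t) : IsFiniteMeasure (f t) := ⟨by simp [hmass t ht]⟩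
  have hI (t : ℝ) (ht : 0 ≤ t) : ∀ᵐ θ ∂(f t), |θ - αd| ≤ π :=
    (ae_iff.2 (hsupp t ht)).mono fun _ => abs_sub_le_pi_of_mem_Ico
  have habs (t : ℝ) (ht : 0 ≤ t) : ∫ θ, |θ - αd| ∂(f t) = ∫ θ, angleDist αd θ ∂(f t) :=
    integral_congr_ae <| (hI t ht).mono fun _ hθ => (angleDist_eq_abs hθ).symm
  have hdecay (t : ℝ) (ht : 0 ≤ t) :
      ∫ θ, angleDist αd θ ∂(f t) ≤ (∫ θ, angleDist αd θ ∂(f 0)) * exp (-L * t) :=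
    le_mul_exp_of_hasDerivAt_le
      (hweak _ (continuous_angleDist αd).measurable ⟨π, abs_angleDist_le_pi αd⟩
        (angleDist_add_two_pi αd))
      (fun s hs => by
        have := hfin s hs
        simpa [measureReal_def, hmass s hs, hρ.le] using
          integral_collision_angleDist_le (αc := αc) ha.le (hI s hs)) ht
  have hθbar0_nonneg : 0 ≤ θbar0 := hθbar0 ▸ by positivity
  have hL : ρ * a / π * θbar0 ≤ L := by
    have : 2 * (a * |αc| / π) ≤ 1 - a - a * θbar0 / π := by
      calc 2 * (a * |αc| / π) ≤ 2 * (a * ((π / 2) * (1 / a - 1) - θbar0 / 2) / π) := by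
            gcongr
        _ = 1 - a - a * θbar0 / π := by field_simp
    calc ρ * a / π * θbar0 = ρ * (a * θbar0 / π) := by ring
      _ ≤ L := mul_le_mul_of_nonneg_left (by linarith) hρ.le
  refine tendsto_zero_of_le_mul_exp (by positivity) hθbar0_nonneg hL
    (.of_forall fun t => by positivity) ?_
  filter_upwards [eventually_ge_atTop 0] with t ht
  rw [habs t ht, hθbar0, habs 0 le_rfl, mul_assoc]
  exact mul_le_mul_of_nonneg_left (hdecay t ht) (by positivity)

/-- If `θ̄₀ < π(1/a − 1)` and `|α_c| ≤ (π/2)(1/a − 1) − θ̄₀/2`, then any weak solution of the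
spatially homogeneous Boltzmann-type model aligns to the desired direction:
`θ̄(t) = (1/ρ)∫_I |θ − α_d| f(t)(dθ) → 0` as `t → +∞`. -/
theorem stmt_1 (αd αc : ℝ) (hαd : αd ∈ Set.Ico (-π) π) (hαc : αc ∈ Set.Ico (-π) π)
    (ρ a : ℝ) (hρ : 0 < ρ) (hρ1 : ρ ≤ 1) (ha : 0 < a) (ha1 : a ≤ 1)
    (f : ℝ → Measure ℝ)
    (hsupp : ∀ t, 0 ≤ t → f t (Set.Ico (-π + αd) (π + αd))ᶜ = 0)
    (hmass : ∀ t, 0 ≤ t → f t Set.univ = ENNReal.ofReal ρ)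
    -- weak formulation of the spatially homogeneous Boltzmann-type model:
    (hweak : ∀ ψ : ℝ → ℝ, Measurable ψ → (∃ M, ∀ x, |ψ x| ≤ M) →
      (∀ x, ψ (x + 2 * π) = ψ x) → ∀ t, 0 ≤ t →
      HasDerivAt (fun s => ∫ θ, ψ θ ∂(f s))
        (∫ θ, ∫ φ, (ψ (Cpost a αd αc θ φ) - ψ θ) ∂(f t) ∂(f t)) t)
    (θbar0 : ℝ) (hθbar0 : θbar0 = (1 / ρ) * ∫ θ, |θ - αd| ∂(f 0))
    (h1 : θbar0 < π * (1 / a - 1))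
    (h2 : |αc| ≤ (π / 2) * (1 / a - 1) - θbar0 / 2) :
    Tendsto (fun t => (1 / ρ) * ∫ θ, |θ - αd| ∂(f t)) atTop (nhds 0) :=
  stmt_1_general αd αc ρ a hρ ha f hsupp hmass hweak θbar0 hθbar0 h2
end

section
/- Let θ⁎, φ⁎ ∈ I and let θ ∈ I be such that θ = 𝒞(θ⁎, φ⁎) + 2hπ for some h ∈ ℤ. Then |θ − α_d| − |θ⁎ − α_d| ≤ (a − 1)|θ⁎ − α_d| + (a/π)|θ⁎ − α_d|·|φ⁎ − α_d| + (a/π)|α_c|(|θ⁎ − α_d| + |φ⁎ − α_d|). -/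
open Real
open scoped Real

lemma aux_min_rep (y : ℝ) (h1 : -π ≤ y) (h2 : y < π) (k : ℤ) :
    |y| ≤ |y + 2 * (k : ℝ) * π| := by
  have hπ := Real.pi_pos
  have hy : |y| ≤ π := abs_le.2 ⟨h1, le_of_lt h2⟩
  rcases lt_trichotomy k 0 with hk | hk | hk
  · have hk1 : k ≤ -1 := by omega
    have hk' : (k : ℝ) ≤ -1 := by exact_mod_cast hk1
    have hle : y + 2 * (k : ℝ) * π ≤ -π := by nlinarith
    calc |y| ≤ π := hy
      _ ≤ |y + 2 * (k : ℝ) * π| := by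
          rw [abs_of_nonpos (by linarith)]; linarith
  · simp [hk]
  · have hk1 : (1 : ℤ) ≤ k := hk
    have hk' : (1 : ℝ) ≤ (k : ℝ) := by exact_mod_cast hk1
    have hle : π ≤ y + 2 * (k : ℝ) * π := by nlinarith
    calc |y| ≤ π := hy
      _ ≤ |y + 2 * (k : ℝ) * π| := le_trans hle (le_abs_self _)

/-- The key interaction estimate: if `θ ∈ I` is the representative modulo `2π` of the
post-interaction angle `𝒞(θ⁎, φ⁎)`, then
`|θ − α_d| − |θ⁎ − α_d| ≤ (a − 1)|θ⁎ − α_d| + (a/π)|θ⁎ − α_d||φ⁎ − α_d|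
  + (a/π)|α_c|(|θ⁎ − α_d| + |φ⁎ − α_d|)`. -/
theorem stmt_3 (αd αc : ℝ) (hαd : αd ∈ Set.Ico (-π) π) (hαc : αc ∈ Set.Ico (-π) π)
    (a : ℝ) (ha : a ∈ Set.Icc (0 : ℝ) 1)
    (θs φs θ : ℝ)
    (hθs : θs ∈ Set.Ico (-π + αd) (π + αd))
    (hφs : φs ∈ Set.Ico (-π + αd) (π + αd))
    (hθ : θ ∈ Set.Ico (-π + αd) (π + αd))
    (hrep : ∃ h : ℤ, θ = Cpost a αd αc θs φs + 2 * (h : ℝ) * π) :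
    |θ - αd| - |θs - αd| ≤ (a - 1) * |θs - αd|
      + (a / π) * |θs - αd| * |φs - αd|
      + (a / π) * |αc| * (|θs - αd| + |φs - αd|) := by
  obtain ⟨h, hrep⟩ := hrep
  obtain ⟨ha0, ha1⟩ := ha
  have hπ := Real.pi_pos
  set P := Pcoll a θs φs with hPdef
  -- basic bounds on the distances
  have hθsabs : |θs - αd| ≤ π := abs_le.2 ⟨by linarith [hθs.1], by linarith [hθs.2]⟩
  have hφsabs : |φs - αd| ≤ π := abs_le.2 ⟨by linarith [hφs.1], by linarith [hφs.2]⟩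
  have hdiff : |θs - φs| ≤ |θs - αd| + |φs - αd| := by
    calc |θs - φs| = |(θs - αd) + -(φs - αd)| := by ring_nf
      _ ≤ |θs - αd| + |-(φs - αd)| := abs_add_le _ _
      _ = |θs - αd| + |φs - αd| := by rw [abs_neg]
  have hmin_le : min |θs - φs| (2 * π - |θs - φs|) ≤ |θs - φs| := min_le_left _ _
  have hmin_le_pi : min |θs - φs| (2 * π - |θs - φs|) ≤ π := by
    rcases le_total |θs - φs| π with hle | hle
    · exact le_trans (min_le_left _ _) hle
    · exact le_trans (min_le_right _ _) (by linarith)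
  have hmin_nonneg : 0 ≤ min |θs - φs| (2 * π - |θs - φs|) := by
    have : |θs - φs| ≤ 2 * π := by linarith
    exact le_min (abs_nonneg _) (by linarith)
  have hP0 : 0 ≤ P := by
    rw [hPdef, Pcoll, Gfun]
    positivity
  have hPa : P ≤ a := by
    rw [hPdef, Pcoll, Gfun]
    have h1 : (1 / π) * min |θs - φs| (2 * π - |θs - φs|) ≤ 1 := by
      rw [div_mul_eq_mul_div, one_mul, div_le_one hπ]; exact hmin_le_pi
    nlinarith
  have hP2 : P ≤ a / π * (|θs - αd| + |φs - αd|) := by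
    have h1 : min |θs - φs| (2 * π - |θs - φs|) ≤ |θs - αd| + |φs - αd| :=
      le_trans hmin_le hdiff
    have heq : P = a / π * min |θs - φs| (2 * π - |θs - φs|) := by
      rw [hPdef, Pcoll, Gfun]; ring
    rw [heq]
    gcongr
  -- identity for Cpost
  have hC : Cpost a αd αc θs φs - αd = P * (θs - αd) + P * αc := by
    rw [Cpost, ← hPdef]; ring
  -- |θ - αd| ≤ |Cpost - αd|
  have hkey : |θ - αd| ≤ |Cpost a αd αc θs φs - αd| := by
    have h1 : -π ≤ θ - αd := by linarith [hθ.1]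
    have h2 : θ - αd < π := by linarith [hθ.2]
    have := aux_min_rep (θ - αd) h1 h2 (-h)
    have heq : (θ - αd) + 2 * ((-h : ℤ) : ℝ) * π = Cpost a αd αc θs φs - αd := by
      push_cast
      rw [hrep]; ring
    rwa [heq] at this
  have hCbound : |Cpost a αd αc θs φs - αd| ≤ P * |θs - αd| + P * |αc| := by
    rw [hC]
    calc |P * (θs - αd) + P * αc| ≤ |P * (θs - αd)| + |P * αc| := abs_add_le _ _
      _ = P * |θs - αd| + P * |αc| := by
          rw [abs_mul, abs_mul, abs_of_nonneg hP0]
  have hb1 : P * |θs - αd| ≤ a * |θs - αd| := by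
    exact mul_le_mul_of_nonneg_right hPa (abs_nonneg _)
  have hb2 : P * |αc| ≤ a / π * (|θs - αd| + |φs - αd|) * |αc| := by
    exact mul_le_mul_of_nonneg_right hP2 (abs_nonneg _)
  have hmid : 0 ≤ (a / π) * |θs - αd| * |φs - αd| := by positivity
  nlinarith [abs_nonneg αc, abs_nonneg (θs - αd), abs_nonneg (φs - αd)]
end

section
/- Let ρ > 0, μ ≥ 0, y₀ > 0, and let λ < 0 satisfy λ ≤ −μy₀. Suppose y : [0, ∞) → [0, ∞) is differentiable with y(0) = y₀ and y'(t) ≤ λρ·y(t) + μρ·y(t)² for all t ≥ 0. Then y(t)·[e^{−λρt}/y₀ + (μ/λ)(e^{−λρt} − 1)] ≤ 1 for all t ≥ 0; in particular y(t) ≤ |λ|y₀/((|λ| − μy₀)e^{|λ|ρt} + μy₀) for all t ≥ 0, and if moreover λ < −μy₀ then y(t) → 0 as t → +∞. -/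
/-!
With `w = y φ - 1`, where `φ` solves the linear equation `φ' = -λρ φ - μρ` with `φ(0) = 1/y₀`
(so that `1/φ` solves the Bernoulli equation `y' = λρ y + μρ y²`), the differential inequality
becomes `w' ≤ μρ y · w` with `w(0) = 0`. Multiplying by the integrating factor `exp (-μρ ∫ y)`
gives a nonincreasing function, so `w ≤ 0`, i.e. `y ≤ 1/φ`. Solving the linear equation
explicitly yields the bound, which tends to `0` when `λ < -μ y₀`.
-/

open Real Filter Set

theorem exists_hasDerivAt_of_continuousOn_Ici {g : ℝ → ℝ} {a : ℝ} (hg : ContinuousOn g (Ici a)) :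
    ∃ G : ℝ → ℝ, ∀ t, a ≤ t → HasDerivAt G (g t) t := by
  have hext : Continuous fun t => g (max a t) :=
    hg.comp_continuous (continuous_const.max continuous_id) fun t => le_max_left a t
  refine ⟨fun t => ∫ s in a..t, g (max a s), fun t ht => ?_⟩
  simpa [max_eq_right ht] using (hext.integral_hasStrictDerivAt a t).hasDerivAt

theorem nonpos_of_hasDerivAt_le_mul {w w' G g : ℝ → ℝ} {a : ℝ}
    (hw : ∀ t, a ≤ t → HasDerivAt w (w' t) t) (hG : ∀ t, a ≤ t → HasDerivAt G (g t) t)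
    (hle : ∀ t, a ≤ t → w' t ≤ g t * w t) (ha : w a ≤ 0) {t : ℝ} (ht : a ≤ t) : w t ≤ 0 := by
  set u : ℝ → ℝ := fun s => w s * exp (-G s)
  have hu : ∀ s, a ≤ s → HasDerivAt u ((w' s - g s * w s) * exp (-G s)) s := fun s hs =>
    ((hw s hs).mul (hG s hs).fun_neg.exp).congr_deriv (by ring)
  have hanti : AntitoneOn u (Ici a) := by
    refine antitoneOn_of_hasDerivWithinAt_nonpos (convex_Ici a)
      (f' := fun s => (w' s - g s * w s) * exp (-G s))
      (fun s hs => (hu s hs).continuousAt.continuousWithinAt) (fun s hs => ?_) (fun s hs => ?_)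
    · rw [interior_Ici] at hs
      exact (hu s hs.le).hasDerivWithinAt
    · rw [interior_Ici] at hs
      exact mul_nonpos_of_nonpos_of_nonneg (sub_nonpos.2 (hle s hs.le)) (exp_pos _).le
  have hut : u t ≤ 0 :=
    (hanti self_mem_Ici ht ht).trans (mul_nonpos_of_nonpos_of_nonneg ha (exp_pos _).le)
  exact nonpos_of_mul_nonpos_left hut (exp_pos _)

/-- `φ' = -a φ - c` says that `1 / φ` solves the Bernoulli equation `y' = a y + c y²`. -/
theorem mul_le_one_of_deriv_le_bernoulli {y y' φ : ℝ → ℝ} {a c t₀ : ℝ}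
    (hy : ∀ t, t₀ ≤ t → HasDerivAt y (y' t) t)
    (hle : ∀ t, t₀ ≤ t → y' t ≤ a * y t + c * y t ^ 2)
    (hφ : ∀ t, t₀ ≤ t → HasDerivAt φ (-a * φ t - c) t) (hφ_nonneg : ∀ t, t₀ ≤ t → 0 ≤ φ t)
    (h₀ : y t₀ * φ t₀ ≤ 1) {t : ℝ} (ht : t₀ ≤ t) : y t * φ t ≤ 1 := by
  obtain ⟨G, hG⟩ := exists_hasDerivAt_of_continuousOn_Ici (g := fun s => c * y s) (a := t₀)
    fun s hs => ((hy s hs).continuousAt.const_mul c).continuousWithinAt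
  have hw : ∀ s, t₀ ≤ s →
      HasDerivAt (fun s => y s * φ s - 1) (y' s * φ s + y s * (-a * φ s - c)) s :=
    fun s hs => ((hy s hs).mul (hφ s hs)).sub_const 1
  have hwle : ∀ s, t₀ ≤ s →
      y' s * φ s + y s * (-a * φ s - c) ≤ c * y s * (y s * φ s - 1) := fun s hs => by
    nlinarith [mul_le_mul_of_nonneg_right (hle s hs) (hφ_nonneg s hs)]
  exact sub_nonpos.1 (nonpos_of_hasDerivAt_le_mul hw hG hwle (sub_nonpos.2 h₀) ht)

/-- The reciprocal of the solution of `y' = λρ y + μρ y²`, `y(0) = y₀`. -/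
noncomputable def bernoulliInv (lam ρ μ y₀ t : ℝ) : ℝ :=
  exp (-lam * ρ * t) / y₀ + μ / lam * (exp (-lam * ρ * t) - 1)

theorem bernoulliInv_zero (lam ρ μ y₀ : ℝ) : bernoulliInv lam ρ μ y₀ 0 = 1 / y₀ := by
  simp [bernoulliInv]

theorem hasDerivAt_bernoulliInv {lam : ℝ} (hlam : lam ≠ 0) (ρ μ y₀ t : ℝ) :
    HasDerivAt (bernoulliInv lam ρ μ y₀)
      (-(lam * ρ) * bernoulliInv lam ρ μ y₀ t - μ * ρ) t := by
  have hE : HasDerivAt (fun s => exp (-lam * ρ * s)) (exp (-lam * ρ * t) * (-lam * ρ)) t := by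
    simpa using ((hasDerivAt_id t).const_mul (-lam * ρ)).exp
  refine ((hE.div_const y₀).add ((hE.sub_const 1).const_mul (μ / lam))).congr_deriv ?_
  simp only [bernoulliInv]
  field_simp
  ring

theorem bernoulliInv_eq_div {lam : ℝ} (hlam : lam < 0) {y₀ : ℝ} (hy₀ : y₀ ≠ 0) (ρ μ t : ℝ) :
    bernoulliInv lam ρ μ y₀ t =
      ((|lam| - μ * y₀) * exp (|lam| * ρ * t) + μ * y₀) / (|lam| * y₀) := by
  rw [abs_of_neg hlam, bernoulliInv]
  field_simp [hlam.ne]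
  ring

theorem bernoulli_denom_pos {lam ρ μ y₀ t : ℝ} (hρ : 0 ≤ ρ) (hlam : lam < 0)
    (hlam' : lam ≤ -μ * y₀) (ht : 0 ≤ t) :
    0 < (|lam| - μ * y₀) * exp (|lam| * ρ * t) + μ * y₀ := by
  have hexp : 1 ≤ exp (|lam| * ρ * t) := one_le_exp (by positivity)
  have hcoef : 0 ≤ |lam| - μ * y₀ := by rw [abs_of_neg hlam]; linarith
  nlinarith [mul_le_mul_of_nonneg_left hexp hcoef, abs_pos.2 hlam.ne]

theorem bernoulli_bound_tendsto_zero {lam ρ μ y₀ : ℝ} (hρ : 0 < ρ) (hlam : lam < 0)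
    (hlam' : lam < -μ * y₀) :
    Tendsto (fun t => |lam| * y₀ / ((|lam| - μ * y₀) * exp (|lam| * ρ * t) + μ * y₀))
      atTop (nhds 0) := by
  have hcoef : 0 < |lam| - μ * y₀ := by rw [abs_of_neg hlam]; linarith
  refine tendsto_const_nhds.div_atTop (tendsto_atTop_add_const_right _ _ ?_)
  refine (tendsto_exp_atTop.comp ?_).const_mul_atTop hcoef
  exact tendsto_id.const_mul_atTop (mul_pos (abs_pos.2 hlam.ne) hρ)

theorem stmt_4_general (ρ μ y₀ lam : ℝ) (hρ : 0 < ρ) (hy₀ : 0 < y₀)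
    (hlam : lam < 0) (hlam' : lam ≤ -μ * y₀)
    (y d : ℝ → ℝ)
    (hy0 : y 0 = y₀)
    (hynn : ∀ t, 0 ≤ t → 0 ≤ y t)
    (hderiv : ∀ t, 0 ≤ t → HasDerivAt y (d t) t)
    (hineq : ∀ t, 0 ≤ t → d t ≤ lam * ρ * y t + μ * ρ * (y t) ^ 2) :
    (∀ t, 0 ≤ t →
        y t * (Real.exp (-lam * ρ * t) / y₀ + (μ / lam) * (Real.exp (-lam * ρ * t) - 1)) ≤ 1)
    ∧ (∀ t, 0 ≤ t →
        y t ≤ |lam| * y₀ / ((|lam| - μ * y₀) * Real.exp (|lam| * ρ * t) + μ * y₀))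
    ∧ (lam < -μ * y₀ → Tendsto y atTop (nhds 0)) := by
  have hφ_pos : ∀ t, 0 ≤ t → 0 < bernoulliInv lam ρ μ y₀ t := fun t ht => by
    rw [bernoulliInv_eq_div hlam hy₀.ne']
    exact div_pos (bernoulli_denom_pos hρ.le hlam hlam' ht) (mul_pos (abs_pos.2 hlam.ne) hy₀)
  have hprod : ∀ t, 0 ≤ t → y t * bernoulliInv lam ρ μ y₀ t ≤ 1 := fun t ht =>
    mul_le_one_of_deriv_le_bernoulli hderiv hineq
      (fun s _ => hasDerivAt_bernoulliInv hlam.ne ρ μ y₀ s) (fun s hs => (hφ_pos s hs).le)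
      (by rw [hy0, bernoulliInv_zero, mul_one_div_cancel hy₀.ne']) ht
  have hbound : ∀ t, 0 ≤ t →
      y t ≤ |lam| * y₀ / ((|lam| - μ * y₀) * Real.exp (|lam| * ρ * t) + μ * y₀) := fun t ht => by
    have h := hprod t ht
    rw [bernoulliInv_eq_div hlam hy₀.ne', ← mul_div_assoc,
      div_le_one (mul_pos (abs_pos.2 hlam.ne) hy₀)] at h
    rwa [le_div_iff₀ (bernoulli_denom_pos hρ.le hlam hlam' ht)]
  refine ⟨hprod, hbound, fun hlt => ?_⟩
  refine squeeze_zero' ?_ ?_ (bernoulli_bound_tendsto_zero hρ hlam hlt)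
  · filter_upwards [eventually_ge_atTop 0] with t ht using hynn t ht
  · filter_upwards [eventually_ge_atTop 0] with t ht using hbound t ht

/-- Comparison result for the scalar differential inequality `y' ≤ λρy + μρy²` on `[0, ∞)`:
`y(t)·[e^{−λρt}/y₀ + (μ/λ)(e^{−λρt} − 1)] ≤ 1`, hence
`y(t) ≤ |λ|y₀/((|λ| − μy₀)e^{|λ|ρt} + μy₀)`, and if `λ < −μy₀` then `y(t) → 0`. -/
theorem stmt_4 (ρ μ y₀ lam : ℝ) (hρ : 0 < ρ) (hμ : 0 ≤ μ) (hy₀ : 0 < y₀)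
    (hlam : lam < 0) (hlam' : lam ≤ -μ * y₀)
    (y d : ℝ → ℝ)
    (hy0 : y 0 = y₀)
    (hynn : ∀ t, 0 ≤ t → 0 ≤ y t)
    (hderiv : ∀ t, 0 ≤ t → HasDerivAt y (d t) t)
    (hineq : ∀ t, 0 ≤ t → d t ≤ lam * ρ * y t + μ * ρ * (y t) ^ 2) :
    (∀ t, 0 ≤ t →
        y t * (Real.exp (-lam * ρ * t) / y₀ + (μ / lam) * (Real.exp (-lam * ρ * t) - 1)) ≤ 1)
    ∧ (∀ t, 0 ≤ t →
        y t ≤ |lam| * y₀ / ((|lam| - μ * y₀) * Real.exp (|lam| * ρ * t) + μ * y₀))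
    ∧ (lam < -μ * y₀ → Tendsto y atTop (nhds 0)) :=
  stmt_4_general ρ μ y₀ lam hρ hy₀ hlam hlam' y d hy0 hynn hderiv hineq
end

section
/- Let ε ∈ (0, 1] and let (f(t))_{t≥0} be a family of positive Borel measures on I, each of total mass ρ, satisfying the ε-scaled weak Boltzmann equation: for every bounded measurable 2π-periodic ψ, d/dt ∫_I ψ(θ) f(t)(dθ) = (1/ε)∫_I∫_I (ψ(θ⁎ + ε𝒫(θ⁎, φ⁎)) − ψ(θ⁎)) f(t)(dθ⁎) f(t)(dφ⁎). Then for every twice continuously differentiable 2π-periodic ψ and every t ≥ 0, |d/dt ∫_I ψ(θ) f(t)(dθ) − ∫_I ψ'(θ⁎) H[f(t)](θ⁎) f(t)(dθ⁎)| ≤ (ε/2)·‖ψ''‖_∞·π²·ρ², where H[f](θ⁎) := ∫_I 𝒫(θ⁎, φ⁎) f(dφ⁎) = ρ(α_d − θ⁎) + a(α_c − α_d + θ⁎)∫_I 𝒢(|θ⁎ − φ⁎|) f(dφ⁎). -/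
open MeasureTheory Real Filter
open scoped Real

/-- `𝒫(θ⁎, φ⁎) = α_d − θ⁎ + P(θ⁎, φ⁎)(α_c − α_d + θ⁎)`. -/
noncomputable def Pscr (αd αc a θ φ : ℝ) : ℝ :=
  αd - θ + Pcoll a θ φ * (αc - αd + θ)

/-- The mean-field transport speed
`H[f](θ⁎) = ρ(α_d − θ⁎) + a(α_c − α_d + θ⁎)∫_I 𝒢(|θ⁎ − φ⁎|) f(dφ⁎)`. -/
noncomputable def Hfield (αd αc a ρ : ℝ) (f : Measure ℝ) (θ : ℝ) : ℝ :=
  ρ * (αd - θ) + a * (αc - αd + θ) * ∫ φ, Gfun |θ - φ| ∂f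

/-! Since `ψ` is `C²`, Taylor's formula turns each collision term
`(ψ(θ⁎ + ε𝒫) − ψ(θ⁎))/ε` into `𝒫 ψ'(θ⁎)` up to an error `ε‖ψ''‖_∞ 𝒫²/2`. Integrating `𝒫(θ⁎, ·)`
against `f` gives `H[f](θ⁎)`, and `|𝒫| ≤ π` on `I × I` because `𝒫` is a convex combination of
`α_d − θ⁎` and `α_c` with weight `P ∈ [0, 1]`. Integrating the error over `I × I` against a
measure of mass `ρ` gives the bound. -/

theorem Function.Periodic.deriv {g : ℝ → ℝ} {c : ℝ} (hg : Function.Periodic g c) :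
    Function.Periodic (_root_.deriv g) c := fun x => by
  rw [← deriv_comp_add_const, show (fun y => g (y + c)) = g from funext hg]

theorem Function.Periodic.abs_le_iSup_abs {g : ℝ → ℝ} {c : ℝ} (hg : Function.Periodic g c)
    (hc : c ≠ 0) (hcont : Continuous g) (x : ℝ) : |g x| ≤ ⨆ y, |g y| := by
  obtain ⟨C, hC⟩ := isBounded_iff_forall_norm_le.1 (hg.isBounded_of_continuous hc hcont)
  exact le_ciSup ⟨C, by rintro _ ⟨y, rfl⟩; exact hC _ ⟨y, rfl⟩⟩ x

theorem abs_sub_sub_mul_deriv_le {ψ : ℝ → ℝ} (hψ : ContDiff ℝ 2 ψ) {M : ℝ}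
    (hM : ∀ x, |deriv (deriv ψ) x| ≤ M) (x h : ℝ) :
    |ψ (x + h) - ψ x - h * deriv ψ x| ≤ M * h ^ 2 / 2 := by
  rcases eq_or_ne h 0 with rfl | hh
  · simp
  have hx : x ≠ x + h := by simpa using hh
  obtain ⟨y, -, hy⟩ := taylor_mean_remainder_lagrange_iteratedDeriv (n := 1) hx hψ.contDiffOn
  have hu : UniqueDiffWithinAt ℝ (Set.uIcc x (x + h)) x :=
    uniqueDiffOn_uIcc hx x Set.left_mem_uIcc
  rw [taylorWithinEval_succ, taylor_within_zero_eval] at hy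
  simp only [CharP.cast_eq_zero, zero_add, Nat.factorial_zero, Nat.cast_one, mul_one, inv_one,
    add_sub_cancel_left, pow_one, one_mul, iteratedDerivWithin_one, smul_eq_mul, Nat.reduceAdd,
    (hψ.differentiable two_ne_zero x).derivWithin hu, Nat.factorial_two, Nat.cast_ofNat] at hy
  rw [sub_sub, hy, iteratedDeriv_succ, iteratedDeriv_one, abs_div, abs_mul, abs_two,
    abs_of_nonneg (sq_nonneg h)]
  gcongr
  exact hM y

theorem abs_sub_div_sub_mul_deriv_le {ψ : ℝ → ℝ} (hψ : ContDiff ℝ 2 ψ) {M : ℝ}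
    (hM : ∀ x, |deriv (deriv ψ) x| ≤ M) {ε : ℝ} (hε : 0 < ε) (x q : ℝ) :
    |(ψ (x + ε * q) - ψ x) / ε - q * deriv ψ x| ≤ ε * M * q ^ 2 / 2 := by
  have h := abs_sub_sub_mul_deriv_le hψ hM x (ε * q)
  rw [show (ψ (x + ε * q) - ψ x) / ε - q * deriv ψ x
      = (ψ (x + ε * q) - ψ x - ε * q * deriv ψ x) / ε by field_simp,
    abs_div, abs_of_pos hε, div_le_iff₀ hε]
  linarith

theorem Continuous.integrable_of_ae_mem_compact {X E : Type*} [TopologicalSpace X] [T2Space X]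
    [MeasurableSpace X] [OpensMeasurableSpace X] [NormedAddCommGroup E] {μ : Measure X}
    [IsFiniteMeasure μ] {K : Set X} {F : X → E} (hF : Continuous F) (hK : IsCompact K)
    (hμ : ∀ᵐ x ∂μ, x ∈ K) : Integrable F μ := by
  rw [← Measure.restrict_eq_self_of_ae_mem hμ]
  exact hF.continuousOn.integrableOn_compact hK

theorem norm_integral_integral_le_of_ae {α β E : Type*} [MeasurableSpace α]
    [MeasurableSpace β] [NormedAddCommGroup E] [NormedSpace ℝ E] {μ : Measure α} {ν : Measure β}
    [IsFiniteMeasure μ] [IsFiniteMeasure ν] {F : α → β → E} {C : ℝ}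
    (h : ∀ᵐ x ∂μ, ∀ᵐ y ∂ν, ‖F x y‖ ≤ C) :
    ‖∫ x, ∫ y, F x y ∂ν ∂μ‖ ≤ C * ν.real Set.univ * μ.real Set.univ :=
  norm_integral_le_of_norm_le_const <| h.mono fun _ hx => norm_integral_le_of_norm_le_const hx

@[fun_prop]
theorem continuous_Gfun : Continuous Gfun := by
  unfold Gfun
  fun_prop

theorem Gfun_mem_Icc {s : ℝ} (h0 : 0 ≤ s) (h2 : s ≤ 2 * π) : Gfun s ∈ Set.Icc 0 1 := by
  have hmin : min s (2 * π - s) ≤ π := by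
    rcases le_total s π with h | h
    · exact (min_le_left _ _).trans h
    · exact (min_le_right _ _).trans (by linarith)
  unfold Gfun
  constructor
  · exact mul_nonneg (by positivity) (le_min h0 (by linarith))
  · rw [one_div, inv_mul_le_iff₀ pi_pos, mul_one]
    exact hmin

theorem Pcoll_mem_Icc {a θ φ : ℝ} (ha : a ∈ Set.Icc 0 1) (h : |θ - φ| ≤ 2 * π) :
    Pcoll a θ φ ∈ Set.Icc 0 1 := by
  obtain ⟨hG0, hG1⟩ := Gfun_mem_Icc (abs_nonneg (θ - φ)) h
  exact ⟨mul_nonneg ha.1 hG0, mul_le_one₀ ha.2 hG0 hG1⟩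

theorem Pscr_eq (αd αc a θ φ : ℝ) :
    Pscr αd αc a θ φ = (1 - Pcoll a θ φ) * (αd - θ) + Pcoll a θ φ * αc := by
  unfold Pscr
  ring

theorem abs_Pscr_le {αd αc a θ φ : ℝ} (hαc : |αc| ≤ π) (ha : a ∈ Set.Icc 0 1)
    (hθ : θ ∈ Set.Icc (-π + αd) (π + αd)) (hφ : φ ∈ Set.Icc (-π + αd) (π + αd)) :
    |Pscr αd αc a θ φ| ≤ π := by
  have hθφ : |θ - φ| ≤ 2 * π := abs_le.2 ⟨by linarith [hθ.1, hφ.2], by linarith [hθ.2, hφ.1]⟩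
  obtain ⟨hP0, hP1⟩ := Pcoll_mem_Icc ha hθφ
  have hθd : |αd - θ| ≤ π := abs_le.2 ⟨by linarith [hθ.2], by linarith [hθ.1]⟩
  calc |Pscr αd αc a θ φ|
      ≤ (1 - Pcoll a θ φ) * |αd - θ| + Pcoll a θ φ * |αc| := by
        rw [Pscr_eq]
        refine (abs_add_le _ _).trans_eq ?_
        rw [abs_mul, abs_mul, abs_of_nonneg (sub_nonneg.2 hP1), abs_of_nonneg hP0]
    _ ≤ (1 - Pcoll a θ φ) * π + Pcoll a θ φ * π := by gcongr
    _ = π := by ring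

@[fun_prop]
theorem continuous_Pscr (αd αc a : ℝ) : Continuous fun p : ℝ × ℝ => Pscr αd αc a p.1 p.2 := by
  unfold Pscr Pcoll
  fun_prop

theorem integral_Pscr {αd αc a ρ θ : ℝ} {μ : Measure ℝ} [IsFiniteMeasure μ]
    (hG : Integrable (fun φ => Gfun |θ - φ|) μ) (hμ : μ.real Set.univ = ρ) :
    ∫ φ, Pscr αd αc a θ φ ∂μ = Hfield αd αc a ρ μ θ := by
  simp only [Pscr, Pcoll, Hfield]
  rw [integral_add (integrable_const _) ((hG.const_mul a).mul_const _), integral_const,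
    integral_mul_const, integral_const_mul, smul_eq_mul, hμ]
  ring

theorem weakCollision_sub_meanField_eq_integral_integral {αd αc a ρ ε : ℝ} {ψ : ℝ → ℝ}
    (hψ : Continuous ψ) (hψ' : Continuous (deriv ψ)) {μ : Measure ℝ} [IsFiniteMeasure μ]
    {K : Set ℝ} (hK : IsCompact K) (hμK : ∀ᵐ θ ∂μ, θ ∈ K) (hμ : μ.real Set.univ = ρ) :
    1 / ε * ∫ θ, ∫ φ, (ψ (θ + ε * Pscr αd αc a θ φ) - ψ θ) ∂μ ∂μ
        - ∫ θ, deriv ψ θ * Hfield αd αc a ρ μ θ ∂μ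
      = ∫ θ, ∫ φ, ((ψ (θ + ε * Pscr αd αc a θ φ) - ψ θ) / ε
          - Pscr αd αc a θ φ * deriv ψ θ) ∂μ ∂μ := by
  have hμKK : ∀ᵐ p ∂μ.prod μ, p ∈ K ×ˢ K :=
    (Measure.quasiMeasurePreserving_fst.ae hμK).and (Measure.quasiMeasurePreserving_snd.ae hμK)
  have hsub := integral_integral_sub
    (Continuous.integrable_of_ae_mem_compact (μ := μ.prod μ)
      (F := fun p => (ψ (p.1 + ε * Pscr αd αc a p.1 p.2) - ψ p.1) / ε) (by fun_prop)
      (hK.prod hK) hμKK)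
    (Continuous.integrable_of_ae_mem_compact
      (F := fun p => Pscr αd αc a p.1 p.2 * deriv ψ p.1) (by fun_prop) (hK.prod hK) hμKK)
  beta_reduce at hsub
  rw [hsub]
  simp_rw [div_eq_mul_inv _ ε, integral_mul_const]
  congr 1
  · ring
  · refine integral_congr_ae (ae_of_all _ fun θ => ?_)
    dsimp only
    rw [integral_Pscr (θ := θ) (Continuous.integrable_of_ae_mem_compact (by fun_prop) hK hμK) hμ,
      mul_comm]

theorem stmt_11_general (αd αc : ℝ) (hαc : αc ∈ Set.Ico (-π) π)
    (ρ a : ℝ) (hρ : 0 < ρ) (ha : a ∈ Set.Icc (0 : ℝ) 1)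
    (ε : ℝ) (hε : 0 < ε)
    (f : ℝ → Measure ℝ)
    (hsupp : ∀ t, 0 ≤ t → f t (Set.Ico (-π + αd) (π + αd))ᶜ = 0)
    (hmass : ∀ t, 0 ≤ t → f t Set.univ = ENNReal.ofReal ρ)
    -- the ε-scaled weak Boltzmann equation:
    (hweak : ∀ ψ : ℝ → ℝ, Measurable ψ → (∃ M, ∀ x, |ψ x| ≤ M) →
      (∀ x, ψ (x + 2 * π) = ψ x) → ∀ t, 0 ≤ t →
      HasDerivAt (fun s => ∫ θ, ψ θ ∂(f s))
        ((1 / ε) * ∫ θ, ∫ φ, (ψ (θ + ε * Pscr αd αc a θ φ) - ψ θ) ∂(f t) ∂(f t)) t) :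
    ∀ ψ : ℝ → ℝ, ContDiff ℝ 2 ψ → (∀ x, ψ (x + 2 * π) = ψ x) →
      ∀ t, 0 ≤ t → ∀ D : ℝ,
        HasDerivAt (fun s => ∫ θ, ψ θ ∂(f s)) D t →
        |D - ∫ θ, deriv ψ θ * Hfield αd αc a ρ (f t) θ ∂(f t)| ≤
          (ε / 2) * (⨆ x : ℝ, |deriv (deriv ψ) x|) * π ^ 2 * ρ ^ 2 := by
  intro ψ hψ hper t ht D hD
  set μ := f t
  have : IsFiniteMeasure μ := ⟨by simp [μ, hmass t ht]⟩
  have hμρ : μ.real Set.univ = ρ := by simp [μ, measureReal_def, hmass t ht, hρ.le]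
  have hK : ∀ᵐ θ ∂μ, θ ∈ Set.Icc (-π + αd) (π + αd) :=
    (ae_iff.2 (hsupp t ht)).mono fun _ hθ => Set.Ico_subset_Icc_self hθ
  have hψper : Function.Periodic ψ (2 * π) := hper
  have hψc := hψ.continuous
  have hψ''c : Continuous (deriv (deriv ψ)) := (hψ.deriv' (n := 1)).continuous_deriv le_rfl
  have hM := hψper.deriv.deriv.abs_le_iSup_abs two_pi_pos.ne' hψ''c
  have hM0 : 0 ≤ ⨆ x, |deriv (deriv ψ) x| := (abs_nonneg _).trans (hM 0)
  rw [hD.unique (hweak ψ hψc.measurable ⟨_, hψper.abs_le_iSup_abs two_pi_pos.ne' hψc⟩ hper t ht),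
    weakCollision_sub_meanField_eq_integral_integral hψc (hψ.continuous_deriv one_le_two)
      isCompact_Icc hK hμρ, ← Real.norm_eq_abs]
  calc _ ≤ ε * (⨆ x, |deriv (deriv ψ) x|) * π ^ 2 / 2 * ρ * ρ := by
        rw [← hμρ]
        refine norm_integral_integral_le_of_ae (hK.mono fun θ hθ => hK.mono fun φ hφ => ?_)
        have hP := abs_le.1 (abs_Pscr_le (abs_le.2 ⟨hαc.1, hαc.2.le⟩) ha hθ hφ)
        rw [Real.norm_eq_abs]
        refine (abs_sub_div_sub_mul_deriv_le hψ hM hε θ _).trans ?_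
        gcongr ε * _ * ?_ / 2
        exact sq_le_sq' hP.1 hP.2
    _ = _ := by ring

/-- Quasi-invariant direction limit: along the `ε`-scaled weak Boltzmann equation, for every
`C²` and `2π`-periodic test function `ψ`, the time derivative of `∫ ψ df(t)` differs from the
mean-field term `∫ ψ'(θ⁎) H[f(t)](θ⁎) f(t)(dθ⁎)` by at most `(ε/2)‖ψ''‖_∞ π² ρ²`. -/
theorem stmt_11 (αd αc : ℝ) (hαd : αd ∈ Set.Ico (-π) π) (hαc : αc ∈ Set.Ico (-π) π)
    (ρ a : ℝ) (hρ : 0 < ρ) (hρ1 : ρ ≤ 1) (ha : a ∈ Set.Icc (0 : ℝ) 1)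
    (ε : ℝ) (hε : 0 < ε) (hε1 : ε ≤ 1)
    (f : ℝ → Measure ℝ)
    (hsupp : ∀ t, 0 ≤ t → f t (Set.Ico (-π + αd) (π + αd))ᶜ = 0)
    (hmass : ∀ t, 0 ≤ t → f t Set.univ = ENNReal.ofReal ρ)
    -- the ε-scaled weak Boltzmann equation:
    (hweak : ∀ ψ : ℝ → ℝ, Measurable ψ → (∃ M, ∀ x, |ψ x| ≤ M) →
      (∀ x, ψ (x + 2 * π) = ψ x) → ∀ t, 0 ≤ t →
      HasDerivAt (fun s => ∫ θ, ψ θ ∂(f s))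
        ((1 / ε) * ∫ θ, ∫ φ, (ψ (θ + ε * Pscr αd αc a θ φ) - ψ θ) ∂(f t) ∂(f t)) t) :
    ∀ ψ : ℝ → ℝ, ContDiff ℝ 2 ψ → (∀ x, ψ (x + 2 * π) = ψ x) →
      ∀ t, 0 ≤ t → ∀ D : ℝ,
        HasDerivAt (fun s => ∫ θ, ψ θ ∂(f s)) D t →
        |D - ∫ θ, deriv ψ θ * Hfield αd αc a ρ (f t) θ ∂(f t)| ≤
          (ε / 2) * (⨆ x : ℝ, |deriv (deriv ψ) x|) * π ^ 2 * ρ ^ 2 :=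
  stmt_11_general αd αc hαc ρ a hρ ha ε hε f hsupp hmass hweak
end

section
/- Let x_i, x_j ∈ ℝ² and v_i, v_j ∈ ℝ² with v_i ≠ v_j, let γ > 0 and assume |x_i − x_j| > γ. Then there exists t ≥ 0 such that |x_i + t v_i − (x_j + t v_j)| = γ if and only if both conditions hold: |x_i − x_j|² − [(x_i − x_j)·(v_i − v_j)]²/|v_i − v_j|² ≤ γ² and (x_i − x_j)·(v_i − v_j) < 0. -/
open scoped RealInnerProductSpace

/-- Two pedestrians extrapolated along straight paths come within distance `γ` at some
nonnegative time if and only if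
`|x_i − x_j|² − [(x_i − x_j)·(v_i − v_j)]²/|v_i − v_j|² ≤ γ²` and
`(x_i − x_j)·(v_i − v_j) < 0`. -/
theorem stmt_12 (xi xj vi vj : EuclideanSpace ℝ (Fin 2)) (hv : vi ≠ vj)
    (γ : ℝ) (hγ : 0 < γ) (hfar : γ < ‖xi - xj‖) :
    (∃ t : ℝ, 0 ≤ t ∧ ‖xi + t • vi - (xj + t • vj)‖ = γ) ↔
      (‖xi - xj‖ ^ 2 - ⟪xi - xj, vi - vj⟫ ^ 2 / ‖vi - vj‖ ^ 2 ≤ γ ^ 2 ∧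
        ⟪xi - xj, vi - vj⟫ < 0) := by
  set d := xi - xj with hd
  set w := vi - vj with hwdef
  have hw : w ≠ 0 := sub_ne_zero.mpr hv
  have hwpos : (0:ℝ) < ‖w‖ := norm_pos_iff.mpr hw
  have hw2 : (0:ℝ) < ‖w‖ ^ 2 := by positivity
  have hkey : ∀ t : ℝ, xi + t • vi - (xj + t • vj) = d + t • w := by
    intro t
    simp only [hd, hwdef, smul_sub]
    abel
  have hF : ∀ t : ℝ, ‖d + t • w‖ ^ 2 = ‖d‖ ^ 2 + 2 * t * ⟪d, w⟫ + t ^ 2 * ‖w‖ ^ 2 := by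
    intro t
    rw [@norm_add_sq_real, real_inner_smul_right, norm_smul]
    ring_nf
    rw [Real.norm_eq_abs, sq_abs]
  have hfar2 : γ ^ 2 < ‖d‖ ^ 2 := by
    have : (0:ℝ) ≤ γ := hγ.le
    nlinarith
  constructor
  · rintro ⟨t, ht0, heq⟩
    have hsq : ‖d‖ ^ 2 + 2 * t * ⟪d, w⟫ + t ^ 2 * ‖w‖ ^ 2 = γ ^ 2 := by
      rw [← hF, ← hkey t, heq]
    have ht : 0 < t := by
      rcases ht0.lt_or_eq with h | h
      · exact h
      · exfalso; rw [← h] at hsq; nlinarith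
    have hneg : ⟪d, w⟫ < 0 := by nlinarith
    refine ⟨?_, hneg⟩
    rw [sub_le_comm, le_div_iff₀ hw2]
    nlinarith [sq_nonneg (⟪d, w⟫ + t * ‖w‖ ^ 2)]
  · rintro ⟨hmin, hneg⟩
    set T : ℝ := -⟪d, w⟫ / ‖w‖ ^ 2 with hT
    have hT0 : 0 < T := div_pos (by linarith) hw2
    set f : ℝ → ℝ := fun t => ‖d‖ ^ 2 + 2 * t * ⟪d, w⟫ + t ^ 2 * ‖w‖ ^ 2 with hf
    have hcont : ContinuousOn f (Set.Icc 0 T) := by fun_prop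
    have hfT : f T = ‖d‖ ^ 2 - ⟪d, w⟫ ^ 2 / ‖w‖ ^ 2 := by
      simp only [hf, hT]
      field_simp
      ring
    have hf0 : f 0 = ‖d‖ ^ 2 := by simp [hf]
    have hmem : γ ^ 2 ∈ Set.Icc (f T) (f 0) := by
      constructor
      · rw [hfT]; exact hmin
      · rw [hf0]; exact hfar2.le
    obtain ⟨t, htmem, hteq⟩ := intermediate_value_Icc' hT0.le hcont hmem
    refine ⟨t, htmem.1, ?_⟩
    have h2 : ‖xi + t • vi - (xj + t • vj)‖ ^ 2 = γ ^ 2 := by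
      rw [hkey t, hF t]; exact hteq
    have hn : 0 ≤ ‖xi + t • vi - (xj + t • vj)‖ := norm_nonneg _
    nlinarith [h2, hn, hγ]
end

section
/- Assume a = a(ρ) = 0 and ρ > 0. Let (f(t))_{t≥0} be a weak solution of the spatially homogeneous Boltzmann-type model with initial datum f₀ of total mass ρ and set θ̄(t) := (1/ρ)∫_I |θ − α_d| f(t)(dθ), θ̄₀ := θ̄(0). Then θ̄(t) ≤ θ̄₀·e^{−ρt} for all t ≥ 0; in particular θ̄(t) → 0 as t → +∞. -/
open MeasureTheory Real Filter
open scoped Real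

/-!
When `a = 0` every interaction sends the angle straight to `α_d`, so for a test function `ψ`
with `ψ α_d = 0` the weak formulation reads `d/dt ∫ ψ df = -ρ ∫ ψ df`, whose solution decays like
`e^{-ρt}`. Applied to the `2π`-periodic extension of `θ ↦ |θ - α_d|` from `I`, which agrees with
`|θ - α_d|` on the support of `f(t)`, this gives `θ̄(t) = θ̄₀ e^{-ρt}`.
-/

theorem Cpost_zero (αd αc θ φ : ℝ) : Cpost 0 αd αc θ φ = αd := by
  simp [Cpost, Pcoll]

theorem eq_mul_exp_of_hasDerivAt_const_mul {u : ℝ → ℝ} {k : ℝ}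
    (hu : ∀ t, 0 ≤ t → HasDerivAt u (k * u t) t) (t : ℝ) (ht : 0 ≤ t) :
    u t = u 0 * exp (k * t) := by
  set g : ℝ → ℝ := fun s => u s * exp (-(k * s))
  have hg : ∀ s, 0 ≤ s → HasDerivAt g 0 s := by
    intro s hs
    have hexp : HasDerivAt (fun x => exp (-(k * x))) (exp (-(k * s)) * -k) s :=
      (((hasDerivAt_id s).const_mul k).neg.exp).congr_deriv (by simp)
    exact ((hu s hs).mul hexp).congr_deriv (by ring)
  have hconst : g t = g 0 :=
    constant_of_has_deriv_right_zero (fun x hx => (hg x hx.1).continuousAt.continuousWithinAt)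
      (fun x hx => (hg x hx.1).hasDerivWithinAt) t (Set.right_mem_Icc.2 ht)
  simp only [g, mul_zero, neg_zero, exp_zero, mul_one] at hconst
  rw [← hconst, mul_assoc, ← exp_add, neg_add_cancel, exp_zero, mul_one]

theorem integral_integral_sub_eq_neg_mul (μ : Measure ℝ) (ψ : ℝ → ℝ) :
    ∫ θ, ∫ _φ, (0 - ψ θ) ∂μ ∂μ = -μ.real Set.univ * ∫ θ, ψ θ ∂μ := by
  simp only [zero_sub, integral_const, smul_eq_mul, integral_const_mul, integral_neg]
  ring

theorem integral_eq_mul_exp_of_collisionless {αd αc ρ : ℝ} {f : ℝ → Measure ℝ}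
    (hmass : ∀ t, 0 ≤ t → f t Set.univ = ENNReal.ofReal ρ)
    (hweak : ∀ ψ : ℝ → ℝ, Measurable ψ → (∃ M, ∀ x, |ψ x| ≤ M) →
      (∀ x, ψ (x + 2 * π) = ψ x) → ∀ t, 0 ≤ t →
      HasDerivAt (fun s => ∫ θ, ψ θ ∂(f s))
        (∫ θ, ∫ φ, (ψ (Cpost 0 αd αc θ φ) - ψ θ) ∂(f t) ∂(f t)) t)
    (hρ : 0 ≤ ρ) {ψ : ℝ → ℝ} (hψ : Measurable ψ) (hψ_bdd : ∃ M, ∀ x, |ψ x| ≤ M)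
    (hψ_per : ∀ x, ψ (x + 2 * π) = ψ x) (hψ_αd : ψ αd = 0) (t : ℝ) (ht : 0 ≤ t) :
    ∫ θ, ψ θ ∂(f t) = (∫ θ, ψ θ ∂(f 0)) * exp (-ρ * t) := by
  refine eq_mul_exp_of_hasDerivAt_const_mul (u := fun s => ∫ θ, ψ θ ∂(f s)) (fun s hs => ?_) t ht
  have hmass_real : (f s).real Set.univ = ρ := by
    rw [measureReal_def, hmass s hs, ENNReal.toReal_ofReal hρ]
  simpa only [Cpost_zero, hψ_αd, integral_integral_sub_eq_neg_mul, hmass_real]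
    using hweak ψ hψ hψ_bdd hψ_per s hs

noncomputable def periodicDist (c x : ℝ) : ℝ := |toIcoMod two_pi_pos (-π) (x - c)|

theorem periodicDist_of_mem_Ico {c x : ℝ} (hx : x ∈ Set.Ico (-π + c) (π + c)) :
    periodicDist c x = |x - c| := by
  rw [periodicDist, (toIcoMod_eq_self _).2]
  constructor <;> linarith [hx.1, hx.2]

theorem periodicDist_self (c : ℝ) : periodicDist c c = 0 := by
  rw [periodicDist_of_mem_Ico ⟨by linarith [pi_pos], by linarith [pi_pos]⟩, sub_self, abs_zero]

theorem periodicDist_add_two_pi (c x : ℝ) : periodicDist c (x + 2 * π) = periodicDist c x := by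
  rw [periodicDist, periodicDist, add_sub_right_comm, toIcoMod_add_right]

theorem abs_periodicDist_le (c x : ℝ) : |periodicDist c x| ≤ π := by
  have h := toIcoMod_mem_Ico two_pi_pos (-π) (x - c)
  rw [periodicDist, abs_abs, abs_le]
  constructor <;> linarith [h.1, h.2]

theorem measurable_periodicDist (c : ℝ) : Measurable (periodicDist c) := by
  have h : periodicDist c = fun x => |-π + Int.fract ((x - c - -π) / (2 * π)) * (2 * π)| :=
    funext fun x => by rw [periodicDist, toIcoMod_eq_add_fract_mul]
  rw [h]
  exact ((Measurable.fract (by fun_prop)).mul_const _).const_add _ |>.abs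

theorem integral_periodicDist {c : ℝ} {μ : Measure ℝ}
    (hμ : μ (Set.Ico (-π + c) (π + c))ᶜ = 0) :
    ∫ θ, periodicDist c θ ∂μ = ∫ θ, |θ - c| ∂μ :=
  integral_congr_ae <| measure_mono_null
    (fun _ hx hxI => hx (periodicDist_of_mem_Ico hxI)) hμ

theorem stmt_17_general (αd αc : ℝ)
    (ρ : ℝ) (hρ : 0 < ρ)
    (a : ℝ) (ha : a = 0)
    (f : ℝ → Measure ℝ)
    (hsupp : ∀ t, 0 ≤ t → f t (Set.Ico (-π + αd) (π + αd))ᶜ = 0)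
    (hmass : ∀ t, 0 ≤ t → f t Set.univ = ENNReal.ofReal ρ)
    -- weak formulation of the spatially homogeneous Boltzmann-type model:
    (hweak : ∀ ψ : ℝ → ℝ, Measurable ψ → (∃ M, ∀ x, |ψ x| ≤ M) →
      (∀ x, ψ (x + 2 * π) = ψ x) → ∀ t, 0 ≤ t →
      HasDerivAt (fun s => ∫ θ, ψ θ ∂(f s))
        (∫ θ, ∫ φ, (ψ (Cpost a αd αc θ φ) - ψ θ) ∂(f t) ∂(f t)) t)
    (θbar : ℝ → ℝ) (hθbar : ∀ t, θbar t = (1 / ρ) * ∫ θ, |θ - αd| ∂(f t))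
    (θbar0 : ℝ) (hθbar0 : θbar0 = θbar 0) :
    (∀ t, 0 ≤ t → θbar t ≤ θbar0 * Real.exp (-ρ * t)) ∧
    Tendsto θbar atTop (nhds 0) := by
  subst ha
  have hθbar_eq : ∀ t, 0 ≤ t → θbar t = θbar0 * exp (-ρ * t) := by
    intro t ht
    have h := integral_eq_mul_exp_of_collisionless hmass hweak hρ.le (measurable_periodicDist αd)
      ⟨π, abs_periodicDist_le αd⟩ (periodicDist_add_two_pi αd) (periodicDist_self αd) t ht
    rw [integral_periodicDist (hsupp t ht), integral_periodicDist (hsupp 0 le_rfl)] at h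
    rw [hθbar0, hθbar, hθbar, h]
    ring
  refine ⟨fun t ht => (hθbar_eq t ht).le, ?_⟩
  have hexp : Tendsto (fun t => θbar0 * exp (-ρ * t)) atTop (nhds 0) := by
    simpa [neg_mul] using
      (tendsto_exp_neg_atTop_nhds_zero.comp (tendsto_id.const_mul_atTop hρ)).const_mul θbar0
  exact hexp.congr' <| (eventually_ge_atTop 0).mono fun t ht => (hθbar_eq t ht).symm

/-- In the collisionless case `a = a(ρ) = 0`, weak solutions of the spatially homogeneous
Boltzmann-type model satisfy `θ̄(t) ≤ θ̄₀ e^{−ρt}`, hence `θ̄(t) → 0` as `t → +∞`. -/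
theorem stmt_17 (αd αc : ℝ) (hαd : αd ∈ Set.Ico (-π) π) (hαc : αc ∈ Set.Ico (-π) π)
    (ρ : ℝ) (hρ : 0 < ρ) (hρ1 : ρ ≤ 1)
    (a : ℝ) (ha : a = 0)
    (f : ℝ → Measure ℝ)
    (hsupp : ∀ t, 0 ≤ t → f t (Set.Ico (-π + αd) (π + αd))ᶜ = 0)
    (hmass : ∀ t, 0 ≤ t → f t Set.univ = ENNReal.ofReal ρ)
    -- weak formulation of the spatially homogeneous Boltzmann-type model:
    (hweak : ∀ ψ : ℝ → ℝ, Measurable ψ → (∃ M, ∀ x, |ψ x| ≤ M) →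
      (∀ x, ψ (x + 2 * π) = ψ x) → ∀ t, 0 ≤ t →
      HasDerivAt (fun s => ∫ θ, ψ θ ∂(f s))
        (∫ θ, ∫ φ, (ψ (Cpost a αd αc θ φ) - ψ θ) ∂(f t) ∂(f t)) t)
    (θbar : ℝ → ℝ) (hθbar : ∀ t, θbar t = (1 / ρ) * ∫ θ, |θ - αd| ∂(f t))
    (θbar0 : ℝ) (hθbar0 : θbar0 = θbar 0) :
    (∀ t, 0 ≤ t → θbar t ≤ θbar0 * Real.exp (-ρ * t)) ∧
    Tendsto θbar atTop (nhds 0) :=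
  stmt_17_general αd αc ρ hρ a ha f hsupp hmass hweak θbar hθbar θbar0 hθbar0
end
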